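/- arXiv:1606.07019 — 2 statements merged into one kernel-verified Lean document; each statement's English description precedes it below -/
import Mathlib

section
/- If f = (f_0, ..., f_7) : ℝ⁸ → ℝ⁸ is twice continuously differentiable on an open set Ω and satisfies the octonionic Cauchy–Riemann–Fueter system D[f] = 0 on Ω, then each component f_j is harmonic on Ω, i.e., Δ f_j = 0 for j = 0, ..., 7. -/
open scoped BigOperators

/-- Octonion multiplication table: `octTable i j = (s, k)` means `e_i * e_j = s • e_k`. -/
def octTable : Fin 8 → Fin 8 → ℝ × Fin 8 :=
  ![![(1,0),(1,1),(1,2),(1,3),(1,4),(1,5),(1,6),(1,7)],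
    ![(1,1),(-1,0),(1,4),(1,7),(-1,2),(1,6),(-1,5),(-1,3)],
    ![(1,2),(-1,4),(-1,0),(1,5),(1,1),(-1,3),(1,7),(-1,6)],
    ![(1,3),(-1,7),(-1,5),(-1,0),(1,6),(1,2),(-1,4),(1,1)],
    ![(1,4),(1,2),(-1,1),(-1,6),(-1,0),(1,7),(1,3),(-1,5)],
    ![(1,5),(-1,6),(1,3),(-1,2),(-1,7),(-1,0),(1,1),(1,4)],
    ![(1,6),(1,5),(-1,7),(1,4),(-1,3),(-1,1),(-1,0),(1,2)],
    ![(1,7),(1,3),(1,6),(-1,1),(1,5),(-1,4),(-1,2),(-1,0)]]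

/-- The octonion `e_i * e_j`, as an element of `ℝ⁸`. -/
def octBasisMul (i j : Fin 8) : Fin 8 → ℝ :=
  fun k => if k = (octTable i j).2 then (octTable i j).1 else 0

/-- Octonion multiplication on `ℝ⁸`, extended bilinearly from the table. -/
def omul (x y : Fin 8 → ℝ) : Fin 8 → ℝ :=
  fun k => ∑ i : Fin 8, ∑ j : Fin 8, x i * y j * octBasisMul i j k

/-- The basis octonion `e_i`. -/
def octE (i : Fin 8) : Fin 8 → ℝ := fun j => if j = i then 1 else 0

/-- Partial derivative `∂g/∂x_k` of a real-valued function on `ℝ⁸`. -/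
noncomputable def pderiv8 (g : EuclideanSpace ℝ (Fin 8) → ℝ) (k : Fin 8)
    (x : EuclideanSpace ℝ (Fin 8)) : ℝ :=
  fderiv ℝ g x (EuclideanSpace.single k 1)

/-- The Cauchy–Riemann–Fueter (Dirac) operator `D[f] = ∑_j e_j (∂f/∂x_j)`
on octonion-valued functions, with octonion multiplication of basis elements:
the `e_m`-component of `D[f](x)` is `∑_j ∑_k (∂f_k/∂x_j)(x) · (e_j e_k)_m`. -/
noncomputable def CRF (f : EuclideanSpace ℝ (Fin 8) → Fin 8 → ℝ)
    (x : EuclideanSpace ℝ (Fin 8)) : Fin 8 → ℝ :=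
  fun m => ∑ j : Fin 8, ∑ k : Fin 8, pderiv8 (fun y => f y k) j x * octBasisMul j k m

/-!
Differentiating `D[f] = 0` in `x_q` and multiplying on the left by `ē_q` gives
`∑_{q,p} ē_q (e_p ∂_q∂_p f) = 0`. Since `∂_q∂_p f` is symmetric in `(q, p)`, the sum may be
symmetrized, and the octonion identity `ē_q (e_p x) + ē_p (e_q x) = 2 δ_{qp} x` turns it
into `2 Δf = 0`.
-/

open Filter Topology

section Clifford

variable {R V ι : Type*} [Semiring R] [AddCommMonoid V] [Module R V] [IsAddTorsionFree V]
  [Fintype ι] [DecidableEq ι]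

theorem sum_diag_eq_zero_of_clifford (B C : ι → Module.End R V)
    (hBC : ∀ q p, C q * B p + C p * B q = if q = p then 2 else 0)
    {H : ι → ι → V} (hH : ∀ q p, H q p = H p q) (hD : ∀ q, ∑ p, B p (H q p) = 0) :
    ∑ q, H q q = 0 := by
  have h₁ : ∑ q, ∑ p, C q (B p (H q p)) = 0 := by
    simp [← map_sum, hD]
  have h₂ : ∑ q, ∑ p, C p (B q (H q p)) = 0 := by
    rw [Finset.sum_comm]
    simpa only [hH] using h₁
  have hterm : ∀ q p, (C q * B p + C p * B q) (H q p) = if q = p then 2 • H q p else 0 := by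
    intro q p
    rw [hBC]
    split_ifs <;> rfl
  have hsum : ∑ q, ∑ p, (C q * B p + C p * B q) (H q p) = 2 • ∑ q, H q q := by
    simp [hterm, Finset.smul_sum]
  rw [← two_nsmul_eq_zero, ← hsum]
  simp [Finset.sum_add_distrib, h₁, h₂]

end Clifford

section SecondDerivatives

variable {E F : Type*} [NormedAddCommGroup E] [NormedSpace ℝ E]
  [NormedAddCommGroup F] [NormedSpace ℝ F] {g : E → F} {x : E}

theorem ContDiffAt.differentiableAt_fderiv (hg : ContDiffAt ℝ 2 g x) :
    DifferentiableAt ℝ (fderiv ℝ g) x :=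
  (hg.fderiv_right (m := 1) le_rfl).differentiableAt one_ne_zero

theorem ContDiffAt.differentiableAt_fderiv_apply (hg : ContDiffAt ℝ 2 g x) (v : E) :
    DifferentiableAt ℝ (fderiv ℝ g · v) x :=
  hg.differentiableAt_fderiv.clm_apply (differentiableAt_const v)

theorem ContDiffAt.fderiv_fderiv_apply_comm (hg : ContDiffAt ℝ 2 g x) (v w : E) :
    fderiv ℝ (fderiv ℝ g · v) x w = fderiv ℝ (fderiv ℝ g · w) x v := by
  simp only [fderiv_clm_apply hg.differentiableAt_fderiv (differentiableAt_const _),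
    fderiv_fun_const, Pi.zero_apply, ContinuousLinearMap.comp_zero, zero_add,
    ContinuousLinearMap.flip_apply]
  exact hg.isSymmSndFDerivAt (by simp) w v

end SecondDerivatives

/-- Integer copy of `octTable`, so that identities of the multiplication table can be checked
by `decide`. -/
def octTableZ : Fin 8 → Fin 8 → ℤ × Fin 8 :=
  ![![(1,0),(1,1),(1,2),(1,3),(1,4),(1,5),(1,6),(1,7)],
    ![(1,1),(-1,0),(1,4),(1,7),(-1,2),(1,6),(-1,5),(-1,3)],
    ![(1,2),(-1,4),(-1,0),(1,5),(1,1),(-1,3),(1,7),(-1,6)],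
    ![(1,3),(-1,7),(-1,5),(-1,0),(1,6),(1,2),(-1,4),(1,1)],
    ![(1,4),(1,2),(-1,1),(-1,6),(-1,0),(1,7),(1,3),(-1,5)],
    ![(1,5),(-1,6),(1,3),(-1,2),(-1,7),(-1,0),(1,1),(1,4)],
    ![(1,6),(1,5),(-1,7),(1,4),(-1,3),(-1,1),(-1,0),(1,2)],
    ![(1,7),(1,3),(1,6),(-1,1),(1,5),(-1,4),(-1,2),(-1,0)]]

theorem octTable_eq_cast (i j : Fin 8) :
    octTable i j = (((octTableZ i j).1 : ℝ), (octTableZ i j).2) := by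
  fin_cases i <;> fin_cases j <;> norm_num [octTable, octTableZ]

def octLeftMulZ (p : Fin 8) : Matrix (Fin 8) (Fin 8) ℤ :=
  Matrix.of fun m k => if m = (octTableZ p k).2 then (octTableZ p k).1 else 0

def octLeftMul (p : Fin 8) : Matrix (Fin 8) (Fin 8) ℝ :=
  Matrix.of fun m k => octBasisMul p k m

/-- `ē_q = octConjSign q • e_q`. -/
def octConjSign (q : Fin 8) : ℤ := if q = 0 then 1 else -1

set_option maxRecDepth 8000 in
/-- `ē_q (e_p x) + ē_p (e_q x) = 2 δ_{qp} x`, the polarization of `ē (e x) = |e|² x`. -/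
theorem octLeftMulZ_clifford (q p : Fin 8) :
    octConjSign q • (octLeftMulZ q * octLeftMulZ p) +
      octConjSign p • (octLeftMulZ p * octLeftMulZ q) = if q = p then 2 else 0 := by
  revert q p
  decide

theorem octLeftMul_eq_mapMatrix (p : Fin 8) :
    octLeftMul p = (Int.castRingHom ℝ).mapMatrix (octLeftMulZ p) := by
  ext m k
  simp only [octLeftMul, octLeftMulZ, octBasisMul, octTable_eq_cast, RingHom.mapMatrix_apply,
    Matrix.map_apply, Matrix.of_apply]
  split_ifs <;> simp

theorem octLeftMul_clifford (q p : Fin 8) :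
    octConjSign q • (octLeftMul q * octLeftMul p) +
      octConjSign p • (octLeftMul p * octLeftMul q) = if q = p then 2 else 0 := by
  have h := congrArg (Int.castRingHom ℝ).mapMatrix (octLeftMulZ_clifford q p)
  rw [map_add, map_zsmul, map_zsmul, map_mul, map_mul] at h
  simp only [← octLeftMul_eq_mapMatrix] at h
  rw [h, apply_ite (Int.castRingHom ℝ).mapMatrix, map_ofNat, map_zero]

theorem sum_diag_eq_zero_of_octonion_dirac {H : Fin 8 → Fin 8 → Fin 8 → ℝ}
    (hH : ∀ q p, H q p = H p q)
    (hD : ∀ q m, ∑ p, ∑ k, H q p k * octBasisMul p k m = 0) :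
    ∑ q, H q q = 0 := by
  let B p := Matrix.toLinAlgEquiv' (octLeftMul p)
  refine sum_diag_eq_zero_of_clifford B (fun q => octConjSign q • B q) (fun q p => ?_) hH
    (fun q => funext fun m => ?_)
  · have h := congrArg Matrix.toLinAlgEquiv' (octLeftMul_clifford q p)
    rw [map_add, map_zsmul, map_zsmul, map_mul, map_mul] at h
    rw [smul_mul_assoc, smul_mul_assoc, h, apply_ite Matrix.toLinAlgEquiv', map_ofNat, map_zero]
  · simpa [B, Matrix.mulVec, dotProduct, octLeftMul, mul_comm] using hD q m

theorem sum_pderiv8_pderiv8_mul_octBasisMul_eq_zero {f : EuclideanSpace ℝ (Fin 8) → Fin 8 → ℝ}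
    {x : EuclideanSpace ℝ (Fin 8)} (hf : ∀ k, ContDiffAt ℝ 2 (fun y => f y k) x)
    (hD : CRF f =ᶠ[𝓝 x] 0) (q m : Fin 8) :
    ∑ p, ∑ k, pderiv8 (pderiv8 (fun y => f y k) p) q x * octBasisMul p k m = 0 := by
  have hderiv : HasFDerivAt (fun y => CRF f y m)
      (∑ p, ∑ k, octBasisMul p k m • fderiv ℝ (pderiv8 (fun y => f y k) p) x) x :=
    HasFDerivAt.fun_sum fun p _ => HasFDerivAt.fun_sum fun k _ =>
      ((hf k).differentiableAt_fderiv_apply _).hasFDerivAt.mul_const _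
  have hzero : HasFDerivAt (fun y => CRF f y m) (0 : _ →L[ℝ] ℝ) x :=
    (hasFDerivAt_const 0 x).congr_of_eventuallyEq (hD.mono fun y hy => congrFun hy m)
  simpa [pderiv8, mul_comm] using
    congrArg (· (EuclideanSpace.single q 1)) (hderiv.unique hzero)

/-- If `f : ℝ⁸ → ℝ⁸` is C² on an open set `Ω` and satisfies the octonionic
Cauchy–Riemann–Fueter system `D[f] = 0` on `Ω`, then each component `f_j` is
harmonic on `Ω`: `Δ f_j = ∑_k ∂²f_j/∂x_k² = 0`. -/
theorem components_of_monogenic_are_harmonic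
    (Ω : Set (EuclideanSpace ℝ (Fin 8))) (hΩ : IsOpen Ω)
    (f : EuclideanSpace ℝ (Fin 8) → Fin 8 → ℝ)
    (hf : ContDiffOn ℝ 2 f Ω)
    (hmono : ∀ x ∈ Ω, CRF f x = 0) :
    ∀ x ∈ Ω, ∀ j : Fin 8,
      (∑ k : Fin 8, pderiv8 (fun y => pderiv8 (fun z => f z j) k y) k x) = 0 := by
  intro x hx j
  have hfx : ∀ k, ContDiffAt ℝ 2 (fun y => f y k) x :=
    contDiffAt_pi.1 (hf.contDiffAt (hΩ.mem_nhds hx))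
  have hD : CRF f =ᶠ[𝓝 x] 0 := eventually_of_mem (hΩ.mem_nhds hx) hmono
  have hsym : ∀ q p k, pderiv8 (pderiv8 (fun y => f y k) p) q x =
      pderiv8 (pderiv8 (fun y => f y k) q) p x := fun q p k =>
    (hfx k).fderiv_fderiv_apply_comm _ _
  have hΔ := sum_diag_eq_zero_of_octonion_dirac (fun q p => funext (hsym q p))
    (sum_pderiv8_pderiv8_mul_octBasisMul_eq_zero hfx hD)
  simpa using congrFun hΔ j
end

section
/- For the M. Riesz generalized Cauchy–Riemann system in ℝⁿ (div f = 0 and ∂f_i/∂x_j = ∂f_j/∂x_i for all i, j), if f = (f_1, ..., f_n) is a C² solution on an open set, then |f|^p is subharmonic for every p ≥ (n-2)/(n-1) on the set where it is smooth. -/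
/-- Partial derivative `∂g/∂x_s` of a real-valued function on `ℝ^N`. -/
noncomputable def pd {N : ℕ} (g : EuclideanSpace ℝ (Fin N) → ℝ) (s : Fin N)
    (x : EuclideanSpace ℝ (Fin N)) : ℝ :=
  fderiv ℝ g x (EuclideanSpace.single s 1)

/-!
Put `u = |f|² = ∑ᵢ fᵢ²` and let `A = (∂ₖfᵢ)` be the Jacobian matrix, which the system makes
symmetric and traceless; `‖A‖` is its Frobenius norm. Each `fᵢ` is harmonic, since
`∑ₖ ∂ₖ∂ₖfᵢ = ∑ₖ ∂ᵢ∂ₖfₖ = ∂ᵢ div f = 0`, so `Δu = 2‖A‖²` and `∇u = 2 A f`, and the chain rule gives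
`Δ(u^(p/2)) = p u^(p/2 - 2) (‖A‖² |f|² + (p - 2) |A f|²)`.
For a symmetric traceless matrix, `n |A v|² ≤ (n - 1) ‖A‖² |v|²`: in an eigenbasis this is
`n λⱼ² ≤ (n - 1) ∑ λᵢ²`, i.e. Cauchy–Schwarz applied to `λⱼ = -∑_{i ≠ j} λᵢ`. Hence the bracket is
nonnegative as soon as `(2 - p)(n - 1) ≤ n`, that is `p ≥ (n - 2)/(n - 1)`.
-/

open Finset Filter Module Matrix Topology
open scoped InnerProductSpace

theorem card_mul_sq_le_of_sum_eq_zero {ι : Type*} [Fintype ι] [DecidableEq ι] {l : ι → ℝ}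
    (hl : ∑ i, l i = 0) (j : ι) :
    Fintype.card ι * l j ^ 2 ≤ (Fintype.card ι - 1) * ∑ i, l i ^ 2 := by
  have hsplit : ∀ g : ι → ℝ, ∑ i, g i = g j + ∑ i ∈ univ.erase j, g i := fun g =>
    (add_sum_erase _ _ (mem_univ j)).symm
  have hcard : ((univ.erase j).card : ℝ) = Fintype.card ι - 1 := by
    rw [card_erase_of_mem (mem_univ j), Nat.cast_sub (card_pos.mpr ⟨j, mem_univ j⟩)]
    simp
  have hcs := sq_sum_le_card_mul_sum_sq (s := univ.erase j) (f := l)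
  rw [hsplit l] at hl
  rw [hsplit fun i => l i ^ 2, ← hcard]
  rw [show ∑ i ∈ univ.erase j, l i = - l j by linarith, neg_sq] at hcs
  nlinarith

namespace LinearMap.IsSymmetric

variable {E : Type*} [NormedAddCommGroup E] [InnerProductSpace ℝ E] [FiniteDimensional ℝ E]
  {T : E →ₗ[ℝ] E} {n : ℕ}

theorem inner_eigenvectorBasis_apply (hT : T.IsSymmetric) (hn : finrank ℝ E = n) (x : E)
    (j : Fin n) :
    ⟪hT.eigenvectorBasis hn j, T x⟫_ℝ =
      hT.eigenvalues hn j * ⟪hT.eigenvectorBasis hn j, x⟫_ℝ := by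
  rw [← hT, apply_eigenvectorBasis, RCLike.ofReal_real_eq_id, id_eq, real_inner_smul_left]

theorem norm_sq_apply_eq_sum (hT : T.IsSymmetric) (hn : finrank ℝ E = n) (x : E) :
    ‖T x‖ ^ 2 = ∑ j, (hT.eigenvalues hn j * ⟪hT.eigenvectorBasis hn j, x⟫_ℝ) ^ 2 := by
  simp_rw [← (hT.eigenvectorBasis hn).sum_sq_inner_right, hT.inner_eigenvectorBasis_apply]

theorem sum_norm_sq_apply_eq_sum_sq_eigenvalues (hT : T.IsSymmetric) (hn : finrank ℝ E = n)
    {ι : Type*} [Fintype ι] (b : OrthonormalBasis ι ℝ E) :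
    ∑ i, ‖T (b i)‖ ^ 2 = ∑ j, hT.eigenvalues hn j ^ 2 := by
  simp_rw [hT.norm_sq_apply_eq_sum hn, mul_pow]
  rw [sum_comm]
  simp_rw [← mul_sum, b.sum_sq_inner_left, (hT.eigenvectorBasis hn).orthonormal.1, one_pow,
    mul_one]

theorem finrank_mul_norm_sq_apply_le (hT : T.IsSymmetric) (htr : T.trace ℝ E = 0)
    {ι : Type*} [Fintype ι] (b : OrthonormalBasis ι ℝ E) (v : E) :
    finrank ℝ E * ‖T v‖ ^ 2 ≤ (finrank ℝ E - 1) * (∑ i, ‖T (b i)‖ ^ 2) * ‖v‖ ^ 2 := by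
  set e := hT.eigenvectorBasis rfl
  set l := hT.eigenvalues rfl
  have hl : ∑ j, l j = 0 := by simpa [htr] using (hT.trace_eq_sum_eigenvalues rfl).symm
  rw [hT.sum_norm_sq_apply_eq_sum_sq_eigenvalues rfl, hT.norm_sq_apply_eq_sum rfl,
    ← e.sum_sq_inner_right v, mul_sum, mul_sum]
  refine sum_le_sum fun j _ => ?_
  have hj := card_mul_sq_le_of_sum_eq_zero hl j
  rw [Fintype.card_fin] at hj
  rw [mul_pow, ← mul_assoc]
  exact mul_le_mul_of_nonneg_right hj (sq_nonneg _)

end LinearMap.IsSymmetric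

theorem Matrix.IsHermitian.card_mul_sum_sq_mulVec_le {ι : Type*} [Fintype ι] [DecidableEq ι]
    {A : Matrix ι ι ℝ} (hA : A.IsHermitian) (htr : A.trace = 0) (v : ι → ℝ) :
    Fintype.card ι * ∑ k, (A *ᵥ v) k ^ 2 ≤
      (Fintype.card ι - 1) * (∑ k, ∑ i, A k i ^ 2) * ∑ i, v i ^ 2 := by
  have hT := Matrix.isSymmetric_toEuclideanLin_iff.mpr hA
  have key := hT.finrank_mul_norm_sq_apply_le ?_ (EuclideanSpace.basisFun ι ℝ) (WithLp.toLp 2 v)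
  · simpa [EuclideanSpace.real_norm_sq_eq, sum_comm (γ := ι) (f := fun i k => A k i ^ 2)] using key
  · rw [LinearMap.trace_eq_sum_inner _ (EuclideanSpace.basisFun ι ℝ)]
    simpa [EuclideanSpace.inner_single_left, Matrix.trace] using htr

theorem mul_add_sub_two_mul_nonneg {n p S F u : ℝ} (hn : 2 ≤ n) (hp : (n - 2) / (n - 1) ≤ p)
    (hS : 0 ≤ S) (h : n * S ≤ (n - 1) * F * u) :
    0 ≤ u * F + (p - 2) * S := by
  have hn1 : 0 < n - 1 := by linarith
  have hpn : (2 - p) * (n - 1) ≤ n := by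
    have := (div_le_iff₀ hn1).mp hp
    linarith
  rcases le_or_gt 2 p with h2 | h2
  · nlinarith
  · nlinarith [mul_le_mul_of_nonneg_left h (by linarith : (0 : ℝ) ≤ 2 - p)]

section PartialDerivatives

variable {n : ℕ} {g h : EuclideanSpace ℝ (Fin n) → ℝ} {x : EuclideanSpace ℝ (Fin n)}

noncomputable def pdLaplacian (g : EuclideanSpace ℝ (Fin n) → ℝ)
    (x : EuclideanSpace ℝ (Fin n)) : ℝ :=
  ∑ k, pd (pd g k) k x

theorem pd_congr (hgh : g =ᶠ[𝓝 x] h) (k : Fin n) : pd g k x = pd h k x := by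
  rw [pd, pd, hgh.fderiv_eq]

theorem pd_add (hg : DifferentiableAt ℝ g x) (hh : DifferentiableAt ℝ h x) (k : Fin n) :
    pd (fun y => g y + h y) k x = pd g k x + pd h k x := by
  rw [pd, fderiv_fun_add hg hh]
  rfl

theorem pd_mul (hg : DifferentiableAt ℝ g x) (hh : DifferentiableAt ℝ h x) (k : Fin n) :
    pd (fun y => g y * h y) k x = pd g k x * h x + g x * pd h k x := by
  unfold pd
  rw [fderiv_fun_mul hg hh]
  simp only [_root_.add_apply, _root_.smul_apply, smul_eq_mul]
  ring

theorem pd_sum {ι : Type*} {s : Finset ι} {g : ι → EuclideanSpace ℝ (Fin n) → ℝ}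
    (hg : ∀ i ∈ s, DifferentiableAt ℝ (g i) x) (k : Fin n) :
    pd (fun y => ∑ i ∈ s, g i y) k x = ∑ i ∈ s, pd (g i) k x := by
  rw [pd, fderiv_fun_sum hg, _root_.sum_apply]
  rfl

theorem pd_rpow (hg : DifferentiableAt ℝ g x) (hgx : g x ≠ 0) (q : ℝ) (k : Fin n) :
    pd (fun y => g y ^ q) k x = q * g x ^ (q - 1) * pd g k x := by
  rw [pd, (hg.hasFDerivAt.rpow_const (Or.inl hgx)).fderiv]
  rfl

theorem pd_const_mul (hg : DifferentiableAt ℝ g x) (c : ℝ) (k : Fin n) :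
    pd (fun y => c * g y) k x = c * pd g k x := by
  rw [pd, fderiv_const_mul hg]
  rfl

theorem ContDiffAt.differentiableAt_pd (hg : ContDiffAt ℝ 2 g x) (k : Fin n) :
    DifferentiableAt ℝ (pd g k) x :=
  ((hg.fderiv_right (m := 1) (by norm_num)).differentiableAt one_ne_zero).clm_apply
    (differentiableAt_const _)

theorem ContDiffAt.pd_pd_eq (hg : ContDiffAt ℝ 2 g x) (i j : Fin n) :
    pd (pd g i) j x =
      fderiv ℝ (fderiv ℝ g) x (EuclideanSpace.single j 1) (EuclideanSpace.single i 1) := by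
  have hd := (hg.fderiv_right (m := 1) (by norm_num)).differentiableAt one_ne_zero
  unfold pd
  rw [fderiv_clm_apply hd (differentiableAt_const _)]
  simp

theorem ContDiffAt.pd_pd_comm (hg : ContDiffAt ℝ 2 g x) (i j : Fin n) :
    pd (pd g i) j x = pd (pd g j) i x := by
  rw [hg.pd_pd_eq, hg.pd_pd_eq, (hg.isSymmSndFDerivAt (by simp)).eq]

theorem ContDiffAt.eventually_differentiableAt (hg : ContDiffAt ℝ 2 g x) :
    ∀ᶠ y in 𝓝 x, DifferentiableAt ℝ g y :=
  (hg.eventually (by simp)).mono fun _ hy => hy.differentiableAt two_ne_zero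

theorem pdLaplacian_sum {ι : Type*} {s : Finset ι} {g : ι → EuclideanSpace ℝ (Fin n) → ℝ}
    (hg : ∀ i ∈ s, ContDiffAt ℝ 2 (g i) x) :
    pdLaplacian (fun y => ∑ i ∈ s, g i y) x = ∑ i ∈ s, pdLaplacian (g i) x := by
  have hnear : ∀ᶠ y in 𝓝 x, ∀ i ∈ s, DifferentiableAt ℝ (g i) y :=
    (eventually_all_finset s).mpr fun i hi => (hg i hi).eventually_differentiableAt
  unfold pdLaplacian
  rw [sum_comm]
  refine sum_congr rfl fun k _ => ?_
  rw [pd_congr (hnear.mono fun y hy => pd_sum hy k) k,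
    pd_sum (fun i hi => (hg i hi).differentiableAt_pd k)]

theorem pdLaplacian_mul (hg : ContDiffAt ℝ 2 g x) (hh : ContDiffAt ℝ 2 h x) :
    pdLaplacian (fun y => g y * h y) x =
      pdLaplacian g x * h x + 2 * ∑ k, pd g k x * pd h k x + g x * pdLaplacian h x := by
  have hnear := hg.eventually_differentiableAt.and hh.eventually_differentiableAt
  have hg1 := hg.differentiableAt two_ne_zero
  have hh1 := hh.differentiableAt two_ne_zero
  unfold pdLaplacian
  rw [mul_sum, sum_mul, mul_sum, ← sum_add_distrib, ← sum_add_distrib]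
  refine sum_congr rfl fun k _ => ?_
  rw [pd_congr (hnear.mono fun y hy => pd_mul hy.1 hy.2 k) k,
    pd_add (g := fun y => pd g k y * h y) (h := fun y => g y * pd h k y)
      ((hg.differentiableAt_pd k).mul hh1) (hg1.mul (hh.differentiableAt_pd k)),
    pd_mul (hg.differentiableAt_pd k) hh1, pd_mul hg1 (hh.differentiableAt_pd k)]
  ring

theorem pdLaplacian_rpow (hg : ContDiffAt ℝ 2 g x) (hgx : 0 < g x) (q : ℝ) :
    pdLaplacian (fun y => g y ^ q) x =
      q * g x ^ (q - 2) * (g x * pdLaplacian g x + (q - 1) * ∑ k, pd g k x ^ 2) := by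
  have hnear := hg.eventually_differentiableAt.and (continuousAt_const.eventually_lt
    hg.continuousAt hgx)
  have hg1 := hg.differentiableAt two_ne_zero
  have hpow : g x ^ (q - 1) = g x ^ (q - 2) * g x := by
    rw [← Real.rpow_add_one hgx.ne']
    ring_nf
  unfold pdLaplacian
  rw [mul_sum, mul_sum, ← sum_add_distrib, mul_sum]
  refine sum_congr rfl fun k _ => ?_
  rw [pd_congr (hnear.mono fun y hy => pd_rpow hy.1 hy.2.ne' q k) k,
    pd_mul ((hg1.rpow_const (Or.inl hgx.ne')).const_mul q) (hg.differentiableAt_pd k),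
    pd_const_mul (hg1.rpow_const (Or.inl hgx.ne')), pd_rpow hg1 hgx.ne', sub_sub,
    one_add_one_eq_two, hpow]
  ring

theorem pdLaplacian_eq_zero_of_riesz {φ : Fin n → EuclideanSpace ℝ (Fin n) → ℝ}
    (hφ : ∀ j, ContDiffAt ℝ 2 (φ j) x) (hdiv : ∀ᶠ y in 𝓝 x, ∑ j, pd (φ j) j y = 0)
    (hsym : ∀ᶠ y in 𝓝 x, ∀ i j, pd (φ j) i y = pd (φ i) j y) (i : Fin n) :
    pdLaplacian (φ i) x = 0 :=
  calc pdLaplacian (φ i) x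
    _ = ∑ k, pd (pd (φ k) i) k x :=
      sum_congr rfl fun k _ => pd_congr (hsym.mono fun _ hy => hy k i) k
    _ = ∑ k, pd (pd (φ k) k) i x := sum_congr rfl fun k _ => (hφ k).pd_pd_comm i k
    _ = pd (fun y => ∑ k, pd (φ k) k y) i x :=
      (pd_sum (fun k _ => (hφ k).differentiableAt_pd k) i).symm
    _ = 0 := by rw [pd_congr hdiv i]; simp [pd]

section VectorField

variable {f : EuclideanSpace ℝ (Fin n) → EuclideanSpace ℝ (Fin n)}

theorem norm_sq_comp_eq_sum :
    (fun z => ‖f z‖ ^ 2) = fun z => ∑ i, f z i * f z i := by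
  funext z
  rw [EuclideanSpace.real_norm_sq_eq]
  simp only [sq]

theorem pd_norm_sq (hf : ∀ i, DifferentiableAt ℝ (fun y => f y i) x) (k : Fin n) :
    pd (fun z => ‖f z‖ ^ 2) k x = 2 * ∑ i, pd (fun y => f y i) k x * f x i := by
  rw [norm_sq_comp_eq_sum, pd_sum (g := fun i y => f y i * f y i) fun i _ => (hf i).mul (hf i),
    mul_sum]
  exact sum_congr rfl fun i _ => by rw [pd_mul (hf i) (hf i)]; ring

theorem pdLaplacian_norm_sq (hf : ∀ i, ContDiffAt ℝ 2 (fun y => f y i) x)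
    (hharm : ∀ i, pdLaplacian (fun y => f y i) x = 0) :
    pdLaplacian (fun z => ‖f z‖ ^ 2) x = 2 * ∑ k, ∑ i, pd (fun y => f y i) k x ^ 2 := by
  rw [norm_sq_comp_eq_sum,
    pdLaplacian_sum (g := fun i y => f y i * f y i) fun i _ => (hf i).mul (hf i), sum_comm, mul_sum]
  refine sum_congr rfl fun i _ => ?_
  rw [pdLaplacian_mul (hf i) (hf i), hharm]
  simp only [sq]
  ring

theorem pdLaplacian_norm_rpow (hf : ∀ i, ContDiffAt ℝ 2 (fun y => f y i) x)
    (hharm : ∀ i, pdLaplacian (fun y => f y i) x = 0) (hfx : f x ≠ 0) (p : ℝ) :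
    pdLaplacian (fun z => ‖f z‖ ^ p) x =
      p * ‖f x‖ ^ (p - 4) * (‖f x‖ ^ 2 * ∑ k, ∑ i, pd (fun y => f y i) k x ^ 2 +
        (p - 2) * ∑ k, (∑ i, pd (fun y => f y i) k x * f x i) ^ 2) := by
  have hsq : ContDiffAt ℝ 2 (fun z => ‖f z‖ ^ 2) x := by
    rw [norm_sq_comp_eq_sum]
    exact ContDiffAt.sum fun i _ => (hf i).mul (hf i)
  have hpow : ∀ z, ‖f z‖ ^ p = (‖f z‖ ^ 2) ^ (p / 2) := fun z => by
    rw [← Real.rpow_natCast, ← Real.rpow_mul (norm_nonneg _)]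
    ring_nf
  simp only [hpow]
  rw [pdLaplacian_rpow hsq (by positivity) (p / 2), pdLaplacian_norm_sq hf hharm,
    ← Real.rpow_natCast, ← Real.rpow_mul (norm_nonneg _)]
  simp only [pd_norm_sq fun i => (hf i).differentiableAt two_ne_zero, mul_pow, ← mul_sum]
  ring_nf

end VectorField

end PartialDerivatives

/-- **Stein–Weiss subharmonicity for the M. Riesz system.** If `f = (f_1, …, f_n)` is a
C² solution on an open set `Ω ⊆ ℝⁿ` of the system `div f = 0`, `∂f_i/∂x_j = ∂f_j/∂x_i`,
then for every `p ≥ (n-2)/(n-1)` the function `|f|^p` is subharmonic on the set where it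
is smooth (where `f ≠ 0`): its Laplacian is nonnegative there. -/
theorem riesz_system_abs_pow_subharmonic (n : ℕ) (hn : 2 ≤ n)
    (Ω : Set (EuclideanSpace ℝ (Fin n))) (hΩ : IsOpen Ω)
    (f : EuclideanSpace ℝ (Fin n) → EuclideanSpace ℝ (Fin n))
    (hf : ContDiffOn ℝ 2 f Ω)
    (hdiv : ∀ x ∈ Ω, (∑ j : Fin n, pd (fun y => f y j) j x) = 0)
    (hsym : ∀ x ∈ Ω, ∀ i j : Fin n,
      pd (fun y => f y j) i x = pd (fun y => f y i) j x)
    (p : ℝ) (hp : ((n : ℝ) - 2) / ((n : ℝ) - 1) ≤ p) :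
    ∀ x ∈ Ω, f x ≠ 0 →
      0 ≤ ∑ k : Fin n, pd (fun y => pd (fun z => ‖f z‖ ^ p) k y) k x := by
  intro x hx hfx
  have hΩx := hΩ.mem_nhds hx
  have hφ : ∀ i, ContDiffAt ℝ 2 (fun y => f y i) x := fun i =>
    (EuclideanSpace.proj (𝕜 := ℝ) i).contDiff.contDiffAt.comp x (hf.contDiffAt hΩx)
  have hharm := pdLaplacian_eq_zero_of_riesz hφ (eventually_of_mem hΩx hdiv)
    (eventually_of_mem hΩx hsym)
  set A : Matrix (Fin n) (Fin n) ℝ := Matrix.of fun k i => pd (fun y => f y i) k x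
  have hA : A.IsHermitian := by
    ext k i
    exact hsym x hx i k
  have hjac := hA.card_mul_sum_sq_mulVec_le (hdiv x hx) (f x).ofLp
  rw [Fintype.card_fin, ← EuclideanSpace.real_norm_sq_eq] at hjac
  have hn' : (2 : ℝ) ≤ n := by exact_mod_cast hn
  have hp0 : 0 ≤ p := le_trans (div_nonneg (by linarith) (by linarith)) hp
  change 0 ≤ pdLaplacian (fun z => ‖f z‖ ^ p) x
  rw [pdLaplacian_norm_rpow hφ hharm hfx p]
  exact mul_nonneg (mul_nonneg hp0 (by positivity))
    (mul_add_sub_two_mul_nonneg hn' hp (by positivity) hjac)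
end
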